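/- Let q ≥ 2 be an integer, let g ≥ 0 be an integer, and let ω_1, …, ω_{2g} be complex numbers with |ω_j| = √q for all j. Let (B_m)_{m≥1} be nonnegative integers such that for every m ≥ 1, ∑_{d ∣ m} d·B_d = q^m + 1 − ∑_{j=1}^{2g} ω_j^m. Then for every complex number t with |t| < 1/q, the infinite product ∏_{m≥1}(1 − t^m)^(−B_m) converges (is multipliable) and equals ∏_{j=1}^{2g}(1 − ω_j·t) / ((1 − t)(1 − q·t)). -/

import Mathlib

/-!
Since `-log (1 - z) = ∑_{k ≥ 1} z^k / k`, the logarithm of `∏_m (1 - t^m)^(-B_m)` is the double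
series `∑_{m,k ≥ 1} B_m t^(mk) / k`. It converges absolutely because `B_m ≤ (2g + 2) q^m` and
`q |t| < 1`. Grouping its terms along `n = mk` gives `∑_n (∑_{d ∣ n} d B_d) t^n / n
= ∑_n (q^n + 1 - ∑_j ω_j^n) t^n / n`, which is
`-log (1 - q t) - log (1 - t) + ∑_j log (1 - ω_j t)`; exponentiate.
-/

open Complex

lemma one_sub_ne_zero_of_norm_lt_one {R : Type*} [NormedRing R] [NormOneClass R] {z : R}
    (hz : ‖z‖ < 1) : 1 - z ≠ 0 :=
  sub_ne_zero.mpr fun h => by simp [← h] at hz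

theorem HasSum.sum_divisorsAntidiagonal {α : Type*} [AddCommMonoid α] [TopologicalSpace α]
    [ContinuousAdd α] [RegularSpace α] {F : ℕ → ℕ → α} {S : α}
    (h : HasSum (fun p : ℕ+ × ℕ+ => F p.1 p.2) S) :
    HasSum (fun n : ℕ+ => ∑ p ∈ (n : ℕ).divisorsAntidiagonal, F p.1 p.2) S :=
  (sigmaAntidiagonalEquivProd.hasSum_iff.mpr h).sigma fun n => by
    rw [← Finset.sum_coe_sort]
    exact hasSum_fintype _

lemma hasSum_pow_div_pnat {z : ℂ} (hz : ‖z‖ < 1) :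
    HasSum (fun n : ℕ+ => z ^ (n : ℕ) / n) (-log (1 - z)) :=
  hasSum_pnat_iff_hasSum_succ (f := fun n : ℕ => z ^ n / n).mpr
    (by simpa only [Nat.cast_succ] using hasSum_taylorSeries_neg_log' hz)

lemma summable_mul_pow_mul_div_pnat {b : ℕ → ℂ} {t : ℂ} (ht : ‖t‖ < 1)
    (hb : Summable fun m : ℕ+ => ‖b m‖ * ‖t‖ ^ (m : ℕ)) :
    Summable fun p : ℕ+ × ℕ+ => b p.1 * t ^ (p.1 * p.2 : ℕ) / p.2 := by
  have hgeo : Summable fun k : ℕ+ => ‖t‖ ^ k.natPred :=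
    Equiv.pnatEquivNat.summable_iff.mpr (summable_geometric_of_lt_one (norm_nonneg t) ht)
  refine .of_norm_bounded (hb.mul_of_nonneg hgeo (fun _ => by positivity) fun _ => by positivity)
    fun ⟨m, k⟩ => ?_
  have hexp : (m : ℕ) + k.natPred ≤ m * k := by
    have := PNat.natPred_add_one k
    have := m.pos
    nlinarith
  calc ‖b m * t ^ (m * k : ℕ) / k‖ ≤ ‖b m‖ * ‖t‖ ^ (m * k : ℕ) := by
        rw [norm_div, norm_mul, norm_pow, Complex.norm_natCast]
        exact div_le_self (by positivity) (by exact_mod_cast k.pos)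
    _ ≤ ‖b m‖ * ‖t‖ ^ ((m : ℕ) + k.natPred) := by
        gcongr ?_ * ?_
        exact pow_le_pow_of_le_one (norm_nonneg t) ht.le hexp
    _ = ‖b m‖ * ‖t‖ ^ (m : ℕ) * ‖t‖ ^ k.natPred := by rw [pow_add, mul_assoc]

theorem hasSum_mul_neg_log_one_sub_pow_pnat {b : ℕ → ℂ} {t L : ℂ} (ht : ‖t‖ < 1)
    (hb : Summable fun m : ℕ+ => ‖b m‖ * ‖t‖ ^ (m : ℕ))
    (hL : HasSum (fun n : ℕ+ => (∑ d ∈ (n : ℕ).divisors, d * b d) * (t ^ (n : ℕ) / n)) L) :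
    HasSum (fun m : ℕ+ => b m * -log (1 - t ^ (m : ℕ))) L := by
  obtain ⟨S, hS⟩ := summable_mul_pow_mul_div_pnat ht hb
  have hrows : HasSum (fun m : ℕ+ => b m * -log (1 - t ^ (m : ℕ))) S :=
    hS.prod_fiberwise fun m => by
      have hm : ‖t ^ (m : ℕ)‖ < 1 := by
        rw [norm_pow]; exact pow_lt_one₀ (norm_nonneg t) ht m.ne_zero
      simpa only [pow_mul, mul_div_assoc] using (hasSum_pow_div_pnat hm).mul_left (b m)
  have hfibres := hS.sum_divisorsAntidiagonal (F := fun m k => b m * t ^ (m * k) / k)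
  suffices hfib : ∀ n : ℕ+, ∑ p ∈ (n : ℕ).divisorsAntidiagonal, b p.1 * t ^ (p.1 * p.2) / p.2 =
      (∑ d ∈ (n : ℕ).divisors, d * b d) * (t ^ (n : ℕ) / n) by
    simp only [hfib] at hfibres
    rwa [hL.unique hfibres]
  intro n
  rw [← Nat.sum_divisorsAntidiagonal (fun d _ => d * b d), Finset.sum_mul]
  refine Finset.sum_congr rfl fun p hp => ?_
  obtain ⟨hpn, hn⟩ := Nat.mem_divisorsAntidiagonal.mp hp
  rw [← hpn] at hn ⊢
  have : (p.2 : ℂ) ≠ 0 := by exact_mod_cast (Nat.mul_ne_zero_iff.mp hn).2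
  have : (p.1 : ℂ) ≠ 0 := by exact_mod_cast (Nat.mul_ne_zero_iff.mp hn).1
  push_cast
  field_simp

theorem hasProd_one_sub_pow_zpow_neg_pnat {B : ℕ → ℕ} {t L : ℂ} (ht : ‖t‖ < 1)
    (hB : Summable fun m : ℕ+ => (B m : ℝ) * ‖t‖ ^ (m : ℕ))
    (hL : HasSum (fun n : ℕ+ => ((∑ d ∈ (n : ℕ).divisors, d * B d : ℕ) : ℂ) * (t ^ (n : ℕ) / n))
      L) :
    HasProd (fun m : ℕ+ => (1 - t ^ (m : ℕ)) ^ (-(B m : ℤ))) (exp L) := by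
  have hlog := hasSum_mul_neg_log_one_sub_pow_pnat (b := fun m => B m) ht
    (by simpa only [Complex.norm_natCast] using hB)
    (by simpa only [Nat.cast_sum, Nat.cast_mul] using hL)
  refine hlog.cexp.congr_fun fun m => ?_
  have hm : 1 - t ^ (m : ℕ) ≠ 0 := one_sub_ne_zero_of_norm_lt_one <| by
    rw [norm_pow]; exact pow_lt_one₀ (norm_nonneg t) ht m.ne_zero
  rw [zpow_neg, zpow_natCast, Function.comp_apply, mul_neg, exp_neg, exp_nat_mul, exp_log hm]

lemma le_sum_divisors_mul_self (B : ℕ → ℕ) {m : ℕ} (hm : m ≠ 0) :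
    B m ≤ ∑ d ∈ m.divisors, d * B d :=
  calc B m ≤ m * B m := Nat.le_mul_of_pos_left _ (Nat.pos_of_ne_zero hm)
    _ ≤ ∑ d ∈ m.divisors, d * B d :=
      Finset.single_le_sum (f := fun d => d * B d) (fun _ _ => Nat.zero_le _)
        (Nat.mem_divisors_self m hm)

lemma summable_mul_pow_of_sum_divisors_le {B : ℕ → ℕ} {C R r : ℝ} (hR : 0 ≤ R) (hr : 0 ≤ r)
    (hRr : R * r < 1)
    (hB : ∀ m : ℕ+, ((∑ d ∈ (m : ℕ).divisors, d * B d : ℕ) : ℝ) ≤ C * R ^ (m : ℕ)) :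
    Summable fun m : ℕ+ => (B m : ℝ) * r ^ (m : ℕ) := by
  refine .of_nonneg_of_le (fun _ => by positivity) (fun m => ?_)
    (((summable_geometric_of_lt_one (mul_nonneg hR hr) hRr).mul_left C).subtype _)
  calc (B m : ℝ) * r ^ (m : ℕ) ≤ C * R ^ (m : ℕ) * r ^ (m : ℕ) := by
        gcongr
        exact (Nat.cast_le.mpr (le_sum_divisors_mul_self B m.ne_zero)).trans (hB m)
    _ = C * (R * r) ^ (m : ℕ) := by rw [mul_pow, mul_assoc]

lemma norm_pow_add_one_sub_sum_pow_le {ι : Type*} [Fintype ι] {Q : ℝ} {ω : ι → ℂ} (hQ : 1 ≤ Q)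
    (hω : ∀ j, ‖ω j‖ ≤ Q) (m : ℕ) :
    ‖(Q : ℂ) ^ m + 1 - ∑ j, ω j ^ m‖ ≤ (Fintype.card ι + 2) * Q ^ m := by
  have hQm : 1 ≤ Q ^ m := one_le_pow₀ hQ
  calc ‖(Q : ℂ) ^ m + 1 - ∑ j, ω j ^ m‖ ≤ ‖(Q : ℂ) ^ m‖ + ‖(1 : ℂ)‖ + ∑ j, ‖ω j ^ m‖ :=
        (norm_sub_le _ _).trans (add_le_add (norm_add_le _ _) (norm_sum_le _ _))
    _ ≤ Q ^ m + Q ^ m + ∑ _j : ι, Q ^ m := by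
        rw [norm_pow, Complex.norm_real, Real.norm_of_nonneg (by linarith), norm_one]
        gcongr with j
        rw [norm_pow]
        exact pow_le_pow_left₀ (norm_nonneg _) (hω j) m
    _ = (Fintype.card ι + 2) * Q ^ m := by
        rw [Finset.sum_const, Finset.card_univ, nsmul_eq_mul]
        ring

/-- Let `q ≥ 2` be an integer, `g ≥ 0`, and `ω_1, …, ω_{2g}` complex numbers
with `|ω_j| = √q`. If the nonnegative integers `B_m` satisfy
`∑_{d ∣ m} d·B_d = q^m + 1 − ∑_j ω_j^m` for every `m ≥ 1`, then for every complex `t`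
with `|t| < 1/q` the infinite product `∏_{m≥1} (1 − t^m)^(−B_m)` is multipliable and
equals `∏_j (1 − ω_j t) / ((1 − t)(1 − q t))`.
(Products over `m ≥ 1` are indexed by `m = k + 1`, `k : ℕ`.) -/
theorem zeta_product_formula (q : ℕ) (hq : 2 ≤ q) (g : ℕ)
    (ω : Fin (2 * g) → ℂ) (hω : ∀ j, ‖ω j‖ = Real.sqrt q)
    (B : ℕ → ℕ)
    (hB : ∀ m : ℕ, 1 ≤ m →
      ((∑ d ∈ m.divisors, d * B d : ℕ) : ℂ) = (q : ℂ) ^ m + 1 - ∑ j, ω j ^ m)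
    (t : ℂ) (ht : ‖t‖ < 1 / q) :
    Multipliable (fun k : ℕ => (1 - t ^ (k + 1)) ^ (-(B (k + 1) : ℤ))) ∧
    ∏' k : ℕ, (1 - t ^ (k + 1)) ^ (-(B (k + 1) : ℤ)) =
      (∏ j, (1 - ω j * t)) / ((1 - t) * (1 - (q : ℂ) * t)) := by
  have hq1 : (1 : ℝ) ≤ q := by exact_mod_cast one_le_two.trans hq
  have hωq : ∀ j, ‖ω j‖ ≤ q := fun j => hω j ▸ Real.sqrt_le_self_iff.mpr (Or.inr hq1)
  have hqt : (q : ℝ) * ‖t‖ < 1 := by rwa [← lt_div_iff₀' (by positivity)]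
  have hqt' : ‖(q : ℂ) * t‖ < 1 := by rwa [norm_mul, Complex.norm_natCast]
  have ht1 : ‖t‖ < 1 := ht.trans_le (div_le_one_of_le₀ hq1 (by positivity))
  have hωt : ∀ j, ‖ω j * t‖ < 1 := fun j =>
    calc ‖ω j * t‖ = ‖ω j‖ * ‖t‖ := norm_mul _ _
      _ ≤ q * ‖t‖ := by gcongr; exact hωq j
      _ < 1 := hqt
  have hlog : HasSum
      (fun n : ℕ+ => ((∑ d ∈ (n : ℕ).divisors, d * B d : ℕ) : ℂ) * (t ^ (n : ℕ) / n))
      (-log (1 - q * t) + -log (1 - t) - ∑ j, -log (1 - ω j * t)) := by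
    refine (((hasSum_pow_div_pnat hqt').add (hasSum_pow_div_pnat ht1)).sub
      (hasSum_sum fun j _ => hasSum_pow_div_pnat (hωt j))).congr_fun fun n => ?_
    rw [hB n n.pos]
    simp only [mul_pow, ← Finset.sum_div, ← Finset.sum_mul]
    ring
  have hsummable : Summable fun m : ℕ+ => (B m : ℝ) * ‖t‖ ^ (m : ℕ) := by
    refine summable_mul_pow_of_sum_divisors_le (C := 2 * g + 2) (R := q) (by positivity)
      (norm_nonneg t) hqt fun m => ?_
    rw [← Complex.norm_natCast, hB m m.pos]
    simpa using norm_pow_add_one_sub_sum_pow_le hq1 hωq m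
  have hprod := hasProd_pnat_iff_hasProd_succ (f := fun k => (1 - t ^ k) ^ (-(B k : ℤ))) |>.mp
    (hasProd_one_sub_pow_zpow_neg_pnat ht1 hsummable hlog)
  refine ⟨hprod.multipliable, hprod.tprod_eq.trans ?_⟩
  have hne : ∀ j ∈ Finset.univ, 1 - ω j * t ≠ 0 := fun j _ =>
    one_sub_ne_zero_of_norm_lt_one (hωt j)
  rw [exp_sub, exp_add, exp_sum]
  simp only [exp_neg, exp_log (one_sub_ne_zero_of_norm_lt_one hqt'),
    exp_log (one_sub_ne_zero_of_norm_lt_one ht1)]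
  rw [Finset.prod_congr rfl fun j hj => by rw [exp_log (hne j hj)], Finset.prod_inv_distrib]
  field_simp [Finset.prod_ne_zero_iff.mpr hne]
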